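/- arXiv:1809.07660 — 6 statements merged into one kernel-verified Lean document; each statement's English description precedes it below -/
import Mathlib

section
/- Invariance of the pole ratios under right multiplication by an upper-triangular matrix: let H, K be upper-Hessenberg n×n matrices and R an upper-triangular matrix with nonzero diagonal. Set H' = H R and K' = K R. Then H' and K' are upper-Hessenberg and for each i with K (i+1) i ≠ 0, one has K' (i+1) i ≠ 0 and H' (i+1) i / K' (i+1) i = H (i+1) i / K (i+1) i. -/
open Matrix

lemma hess_mul_tri_zero {n : ℕ} (A R : Matrix (Fin n) (Fin n) ℂ)
    (hA : ∀ i j : Fin n, (j : ℕ) + 1 < (i : ℕ) → A i j = 0)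
    (hR : ∀ i j : Fin n, (j : ℕ) < (i : ℕ) → R i j = 0)
    (i j : Fin n) (hij : (j : ℕ) + 1 < (i : ℕ)) : (A * R) i j = 0 := by
  rw [Matrix.mul_apply]
  apply Finset.sum_eq_zero
  intro k _
  rcases lt_or_ge ((k : ℕ) + 1) (i : ℕ) with h | h
  · rw [hA i k h, zero_mul]
  · rw [hR k j (by omega), mul_zero]

lemma hess_mul_tri_sub {n : ℕ} (A R : Matrix (Fin n) (Fin n) ℂ)
    (hA : ∀ i j : Fin n, (j : ℕ) + 1 < (i : ℕ) → A i j = 0)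
    (hR : ∀ i j : Fin n, (j : ℕ) < (i : ℕ) → R i j = 0)
    (i j : Fin n) (hij : (i : ℕ) = (j : ℕ) + 1) : (A * R) i j = A i j * R j j := by
  rw [Matrix.mul_apply]
  rw [Finset.sum_eq_single j]
  · intro k _ hk
    rcases lt_or_ge ((k : ℕ) + 1) (i : ℕ) with h | h
    · rw [hA i k h, zero_mul]
    · rw [hR k j (by omega), mul_zero]
  · intro h; exact absurd (Finset.mem_univ j) h

theorem pole_ratios_invariant_under_upper_triangular {n : ℕ}
    (H K R : Matrix (Fin n) (Fin n) ℂ)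
    (hH : ∀ i j : Fin n, (j : ℕ) + 1 < (i : ℕ) → H i j = 0)
    (hK : ∀ i j : Fin n, (j : ℕ) + 1 < (i : ℕ) → K i j = 0)
    (hR : ∀ i j : Fin n, (j : ℕ) < (i : ℕ) → R i j = 0)
    (hRdiag : ∀ i : Fin n, R i i ≠ 0) :
    (∀ i j : Fin n, (j : ℕ) + 1 < (i : ℕ) → (H * R) i j = 0) ∧
    (∀ i j : Fin n, (j : ℕ) + 1 < (i : ℕ) → (K * R) i j = 0) ∧
    (∀ i j : Fin n, (i : ℕ) = (j : ℕ) + 1 → K i j ≠ 0 →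
      (K * R) i j ≠ 0 ∧ (H * R) i j / (K * R) i j = H i j / K i j) := by
  refine ⟨hess_mul_tri_zero H R hH hR, hess_mul_tri_zero K R hK hR, ?_⟩
  intro i j hij hKij
  rw [hess_mul_tri_sub K R hK hR i j hij, hess_mul_tri_sub H R hH hR i j hij]
  constructor
  · exact mul_ne_zero hKij (hRdiag j)
  · rw [mul_div_mul_right _ _ (hRdiag j)]
end

section
/- Structure transfer in a biorthogonal pencil: let H_V, K_V be upper-Hessenberg, H_W, K_W be invertible lower-Hessenberg (transposes upper-Hessenberg), R, R_B invertible upper-triangular, and L, L_B invertible lower-triangular. Suppose R K_V R_B = L⁻¹ H_W⁻ᴴ L_B⁻¹ =: K and R H_V R_B = L⁻¹ K_W⁻ᴴ L_B⁻¹ =: H. If moreover H_W⁻ᴴ and K_W⁻ᴴ are lower-Hessenberg, then H and K are tridiagonal. -/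
open Matrix

-- lower-banded (zero when j + k < i) times upper triangular stays lower-banded
private lemma band_mul_upper {m k : ℕ} (A B : Matrix (Fin m) (Fin m) ℂ)
    (hA : ∀ i j : Fin m, (j : ℕ) + k < (i : ℕ) → A i j = 0)
    (hB : ∀ i j : Fin m, (j : ℕ) < (i : ℕ) → B i j = 0) :
    ∀ i j : Fin m, (j : ℕ) + k < (i : ℕ) → (A * B) i j = 0 := by
  intro i j hij
  rw [Matrix.mul_apply]
  apply Finset.sum_eq_zero
  intro l _
  rcases lt_or_ge (j : ℕ) (l : ℕ) with h | h
  · rw [hB l j h, mul_zero]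
  · rw [hA i l (by omega), zero_mul]

private lemma upper_mul_band {m k : ℕ} (A B : Matrix (Fin m) (Fin m) ℂ)
    (hA : ∀ i j : Fin m, (j : ℕ) + k < (i : ℕ) → A i j = 0)
    (hB : ∀ i j : Fin m, (j : ℕ) < (i : ℕ) → B i j = 0) :
    ∀ i j : Fin m, (j : ℕ) + k < (i : ℕ) → (B * A) i j = 0 := by
  intro i j hij
  rw [Matrix.mul_apply]
  apply Finset.sum_eq_zero
  intro l _
  rcases lt_or_ge (l : ℕ) (i : ℕ) with h | h
  · rw [hB i l h, zero_mul]
  · rw [hA l j (by omega), mul_zero]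

-- upper-banded (zero when i + k < j) times lower triangular stays upper-banded
private lemma uband_mul_lower {m k : ℕ} (A B : Matrix (Fin m) (Fin m) ℂ)
    (hA : ∀ i j : Fin m, (i : ℕ) + k < (j : ℕ) → A i j = 0)
    (hB : ∀ i j : Fin m, (i : ℕ) < (j : ℕ) → B i j = 0) :
    ∀ i j : Fin m, (i : ℕ) + k < (j : ℕ) → (A * B) i j = 0 := by
  intro i j hij
  rw [Matrix.mul_apply]
  apply Finset.sum_eq_zero
  intro l _
  rcases lt_or_ge (l : ℕ) (j : ℕ) with h | h
  · rw [hB l j h, mul_zero]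
  · rw [hA i l (by omega), zero_mul]

private lemma lower_mul_uband {m k : ℕ} (A B : Matrix (Fin m) (Fin m) ℂ)
    (hA : ∀ i j : Fin m, (i : ℕ) + k < (j : ℕ) → A i j = 0)
    (hB : ∀ i j : Fin m, (i : ℕ) < (j : ℕ) → B i j = 0) :
    ∀ i j : Fin m, (i : ℕ) + k < (j : ℕ) → (B * A) i j = 0 := by
  intro i j hij
  rw [Matrix.mul_apply]
  apply Finset.sum_eq_zero
  intro l _
  rcases lt_or_ge (i : ℕ) (l : ℕ) with h | h
  · rw [hB i l h, zero_mul]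
  · rw [hA l j (by omega), mul_zero]

private lemma inv_lower {m : ℕ} (L : Matrix (Fin m) (Fin m) ℂ) (hLunit : IsUnit L)
    (hL : ∀ i j : Fin m, (i : ℕ) < (j : ℕ) → L i j = 0) :
    ∀ i j : Fin m, (i : ℕ) < (j : ℕ) → L⁻¹ i j = 0 := by
  haveI := hLunit.invertible
  have hbt : L.BlockTriangular (fun i : Fin m => -(i : ℤ)) := by
    intro i j hij
    exact hL i j (by exact_mod_cast neg_lt_neg_iff.mp hij)
  have := Matrix.blockTriangular_inv_of_blockTriangular hbt
  intro i j hij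
  exact this (by simpa using hij)

theorem structure_transfer_biorthogonal_pencil {m : ℕ}
    (HV KV HW KW R RB L LB H K : Matrix (Fin m) (Fin m) ℂ)
    (hHV : ∀ i j : Fin m, (j : ℕ) + 1 < (i : ℕ) → HV i j = 0)
    (hKV : ∀ i j : Fin m, (j : ℕ) + 1 < (i : ℕ) → KV i j = 0)
    (hHW : ∀ i j : Fin m, (i : ℕ) + 1 < (j : ℕ) → HW i j = 0) (hHWunit : IsUnit HW)
    (hKW : ∀ i j : Fin m, (i : ℕ) + 1 < (j : ℕ) → KW i j = 0) (hKWunit : IsUnit KW)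
    (hRunit : IsUnit R) (hR : ∀ i j : Fin m, (j : ℕ) < (i : ℕ) → R i j = 0)
    (hRBunit : IsUnit RB) (hRB : ∀ i j : Fin m, (j : ℕ) < (i : ℕ) → RB i j = 0)
    (hLunit : IsUnit L) (hL : ∀ i j : Fin m, (i : ℕ) < (j : ℕ) → L i j = 0)
    (hLBunit : IsUnit LB) (hLB : ∀ i j : Fin m, (i : ℕ) < (j : ℕ) → LB i j = 0)
    (hKdef : K = R * KV * RB) (hKeq : K = L⁻¹ * (HWᴴ)⁻¹ * LB⁻¹)
    (hHdef : H = R * HV * RB) (hHeq : H = L⁻¹ * (KWᴴ)⁻¹ * LB⁻¹)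
    (hHWinv : ∀ i j : Fin m, (i : ℕ) + 1 < (j : ℕ) → ((HWᴴ)⁻¹) i j = 0)
    (hKWinv : ∀ i j : Fin m, (i : ℕ) + 1 < (j : ℕ) → ((KWᴴ)⁻¹) i j = 0) :
    (∀ i j : Fin m, ((j : ℕ) + 1 < (i : ℕ) ∨ (i : ℕ) + 1 < (j : ℕ)) → H i j = 0) ∧
    (∀ i j : Fin m, ((j : ℕ) + 1 < (i : ℕ) ∨ (i : ℕ) + 1 < (j : ℕ)) → K i j = 0) := by
  have hLinv := inv_lower L hLunit hL
  have hLBinv := inv_lower LB hLBunit hLB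
  -- lower Hessenberg parts (zero when j+1 < i) from R * · * RB
  have hHlow : ∀ i j : Fin m, (j : ℕ) + 1 < (i : ℕ) → H i j = 0 := by
    rw [hHdef]
    exact band_mul_upper _ RB (upper_mul_band HV R hHV hR) hRB
  have hKlow : ∀ i j : Fin m, (j : ℕ) + 1 < (i : ℕ) → K i j = 0 := by
    rw [hKdef]
    exact band_mul_upper _ RB (upper_mul_band KV R hKV hR) hRB
  have hHup : ∀ i j : Fin m, (i : ℕ) + 1 < (j : ℕ) → H i j = 0 := by
    rw [hHeq]
    exact uband_mul_lower _ LB⁻¹ (lower_mul_uband _ L⁻¹ hKWinv hLinv) hLBinv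
  have hKup : ∀ i j : Fin m, (i : ℕ) + 1 < (j : ℕ) → K i j = 0 := by
    rw [hKeq]
    exact uband_mul_lower _ LB⁻¹ (lower_mul_uband _ L⁻¹ hHWinv hLinv) hLBinv
  exact ⟨fun i j h => h.elim (hHlow i j) (hHup i j),
         fun i j h => h.elim (hKlow i j) (hKup i j)⟩
end

section
/- The inverse of an invertible upper-Hessenberg matrix has rank-one lower part: if H ∈ ℂ^{n×n} is invertible upper-Hessenberg with all subdiagonal entries nonzero, then there exist vectors u, v ∈ ℂⁿ such that (H⁻¹) i j = u i · v j for all i ≥ j (i.e., the lower-triangular part of H⁻¹, including the diagonal, coincides with that of a rank-one matrix). -/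
open Matrix

theorem inverse_of_proper_hessenberg_is_semiseparable {n : ℕ}
    (H : Matrix (Fin n) (Fin n) ℂ)
    (hunit : IsUnit H)
    (hHess : ∀ i j : Fin n, (j : ℕ) + 1 < (i : ℕ) → H i j = 0)
    (hproper : ∀ i j : Fin n, (i : ℕ) = (j : ℕ) + 1 → H i j ≠ 0) :
    ∃ u v : Fin n → ℂ, ∀ i j : Fin n, (j : ℕ) ≤ (i : ℕ) → H⁻¹ i j = u i * v j := by
  rcases Nat.eq_zero_or_pos n with hn | hn
  · subst hn; exact ⟨0, 0, fun i => i.elim0⟩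
  set B := H⁻¹ with hB
  have hdet : IsUnit H.det := (Matrix.isUnit_iff_isUnit_det H).mp hunit
  have hHB : H * B = 1 := Matrix.mul_nonsing_inv H hdet
  set L : Fin n := ⟨n - 1, by omega⟩ with hL
  set z : Fin n := ⟨0, hn⟩ with hz
  have step : ∀ (i : Fin n) (hi : (i : ℕ) + 1 < n) (c : Fin n),
      (⟨(i : ℕ) + 1, hi⟩ : Fin n) ≠ c →
      H ⟨(i : ℕ) + 1, hi⟩ i * B i c =
        -∑ k ∈ Finset.univ.filter (fun k : Fin n => (i : ℕ) < (k : ℕ)),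
          H ⟨(i : ℕ) + 1, hi⟩ k * B k c := by
    intro i hi c hne
    set i' : Fin n := ⟨(i : ℕ) + 1, hi⟩ with hi'
    have h1 : (H * B) i' c = 0 := by rw [hHB]; exact Matrix.one_apply_ne hne
    rw [Matrix.mul_apply] at h1
    have hsplit : ∑ k, H i' k * B k c =
        H i' i * B i c + ∑ k ∈ Finset.univ.erase i, H i' k * B k c :=
      (Finset.add_sum_erase _ _ (Finset.mem_univ i)).symm
    have h2 : ∑ k ∈ Finset.univ.filter (fun k : Fin n => (i : ℕ) < (k : ℕ)),
          H i' k * B k c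
        = ∑ k ∈ Finset.univ.erase i, H i' k * B k c := by
      apply Finset.sum_subset
      · intro k hk
        have hk' : (i : ℕ) < (k : ℕ) := (Finset.mem_filter.mp hk).2
        refine Finset.mem_erase.mpr ⟨?_, Finset.mem_univ k⟩
        intro h
        rw [h] at hk'
        exact lt_irrefl _ hk'
      · intro k hk hk2
        have hk1 : k ≠ i := (Finset.mem_erase.mp hk).1
        have hk3 : ¬ (i : ℕ) < (k : ℕ) := by
          intro h; exact hk2 (Finset.mem_filter.mpr ⟨Finset.mem_univ k, h⟩)
        have hklt : (k : ℕ) < (i : ℕ) := by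
          rcases lt_or_eq_of_le (le_of_not_gt hk3) with h | h
          · exact h
          · exact absurd (Fin.ext h) hk1
        have hval : ((i' : Fin n) : ℕ) = (i : ℕ) + 1 := rfl
        have : H i' k = 0 := hHess i' k (by omega)
        rw [this, zero_mul]
    rw [hsplit] at h1
    linear_combination h1 + h2
  have hproper' : ∀ (i : Fin n) (hi : (i : ℕ) + 1 < n),
      H ⟨(i : ℕ) + 1, hi⟩ i ≠ 0 := fun i hi => hproper _ _ rfl
  have main : ∀ d : ℕ, ∀ i : Fin n, n - 1 - (i : ℕ) ≤ d →
      ∀ j : Fin n, (j : ℕ) ≤ (i : ℕ) → B i j * B L z = B i z * B L j := by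
    intro d
    induction d with
    | zero =>
      intro i hi j hj
      have hiL : i = L := Fin.ext (by simp [hL]; omega)
      rw [hiL]; ring
    | succ d ih =>
      intro i hi j hj
      by_cases hiL : (i : ℕ) = n - 1
      · rw [show i = L from Fin.ext (by simp [hL]; omega)]; ring
      · have hi1 : (i : ℕ) + 1 < n := by omega
        set i' : Fin n := ⟨(i : ℕ) + 1, hi1⟩ with hi'
        have hne_j : i' ≠ j := by
          intro h; have := congrArg Fin.val h; simp [hi'] at this; omega
        have hne_z : i' ≠ z := by
          intro h; have := congrArg Fin.val h; simp [hi', hz] at this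
        have e1 := step i hi1 j hne_j
        have e0 := step i hi1 z hne_z
        have hc := hproper' i hi1
        apply mul_left_cancel₀ hc
        calc H i' i * (B i j * B L z) = (H i' i * B i j) * B L z := by ring
          _ = (-∑ k ∈ Finset.univ.filter (fun k : Fin n => (i : ℕ) < (k : ℕ)),
                H i' k * B k j) * B L z := by rw [e1]
          _ = -∑ k ∈ Finset.univ.filter (fun k : Fin n => (i : ℕ) < (k : ℕ)),
                H i' k * (B k z * B L j) := by
              rw [neg_mul, Finset.sum_mul]
              congr 1
              apply Finset.sum_congr rfl
              intro k hk
              have hik : (i : ℕ) < (k : ℕ) := (Finset.mem_filter.mp hk).2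
              rw [mul_assoc, ih k (by omega) j (by omega)]
          _ = (-∑ k ∈ Finset.univ.filter (fun k : Fin n => (i : ℕ) < (k : ℕ)),
                H i' k * B k z) * B L j := by
              rw [neg_mul, Finset.sum_mul]
              congr 1
              apply Finset.sum_congr rfl
              intro k _
              ring
          _ = (H i' i * B i z) * B L j := by rw [e0]
          _ = H i' i * (B i z * B L j) := by ring
  have hvz : B L z ≠ 0 := by
    intro h0
    have col : ∀ d : ℕ, ∀ i : Fin n, n - 1 - (i : ℕ) ≤ d → B i z = 0 := by
      intro d
      induction d with
      | zero =>
        intro i hi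
        rw [show i = L from Fin.ext (by simp [hL]; omega)]; exact h0
      | succ d ih =>
        intro i hi
        by_cases hiL : (i : ℕ) = n - 1
        · rw [show i = L from Fin.ext (by simp [hL]; omega)]; exact h0
        · have hi1 : (i : ℕ) + 1 < n := by omega
          have hne_z : (⟨(i : ℕ) + 1, hi1⟩ : Fin n) ≠ z := by
            intro h; have := congrArg Fin.val h; simp [hz] at this
          have e0 := step i hi1 z hne_z
          have hc := hproper' i hi1
          have hzero : H ⟨(i : ℕ) + 1, hi1⟩ i * B i z = 0 := by
            rw [e0, neg_eq_zero]
            apply Finset.sum_eq_zero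
            intro k hk
            have hik : (i : ℕ) < (k : ℕ) := (Finset.mem_filter.mp hk).2
            rw [ih k (by omega), mul_zero]
          exact (mul_eq_zero.mp hzero).resolve_left hc
    have h1 : (1 : Matrix (Fin n) (Fin n) ℂ) z z = 0 := by
      rw [← hHB, Matrix.mul_apply]
      apply Finset.sum_eq_zero
      intro k _
      rw [col n k (by omega), mul_zero]
    rw [Matrix.one_apply_eq] at h1
    exact one_ne_zero h1
  refine ⟨fun i => B i z, fun j => B L j / B L z, ?_⟩
  intro i j hj
  rw [mul_div_assoc', eq_div_iff hvz]
  exact main n i (by omega) j hj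
end

section
/- Projection of a unitary matrix onto its Krylov space has Hessenberg-plus-semiseparable structure: let U ∈ ℂ^{m×m} be unitary and V ∈ ℂ^{m×m} unitary with Z := Vᴴ U V upper-Hessenberg with nonzero subdiagonal. Then Z is unitary, and the strictly upper-triangular part of Z above the first superdiagonal agrees with a rank-one matrix: there exist vectors u, v with Z i j = u i · v j for all j > i + 1. -/
open Matrix Finset

noncomputable def auxC (W : ℕ → ℕ → ℂ) : ℕ → ℂ
  | 0 => 1
  | (j+1) => -(∑ k ∈ (Finset.range (j+1)).attach,
      auxC W k.1 * star (W k.1 j)) / star (W (j+1) j)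
  decreasing_by exact Finset.mem_range.mp k.2

theorem unitary_krylov_projection_structure {m : ℕ}
    (U V Z : Matrix (Fin m) (Fin m) ℂ)
    (hU : Uᴴ * U = 1) (hV : Vᴴ * V = 1)
    (hZ : Z = Vᴴ * U * V)
    (hHess : ∀ i j : Fin m, (j : ℕ) + 1 < (i : ℕ) → Z i j = 0)
    (hproper : ∀ i j : Fin m, (i : ℕ) = (j : ℕ) + 1 → Z i j ≠ 0) :
    Zᴴ * Z = 1 ∧
    ∃ u v : Fin m → ℂ, ∀ i j : Fin m, (i : ℕ) + 1 < (j : ℕ) → Z i j = u i * v j := by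
  have hVV : V * Vᴴ = 1 := mul_eq_one_comm.mp hV
  have hZZ : Zᴴ * Z = 1 := by
    rw [hZ]
    calc (Vᴴ * U * V)ᴴ * (Vᴴ * U * V)
        = Vᴴ * (Uᴴ * ((V * Vᴴ) * (U * V))) := by
          simp [Matrix.conjTranspose_mul, Matrix.mul_assoc]
      _ = Vᴴ * (Uᴴ * U * V) := by rw [hVV, Matrix.one_mul, Matrix.mul_assoc]
      _ = 1 := by rw [hU, Matrix.one_mul, hV]
  refine ⟨hZZ, ?_⟩
  rcases Nat.eq_zero_or_pos m with hm | hm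
  · exact ⟨0, 0, fun i j _ => absurd i.isLt (by omega)⟩
  set W : ℕ → ℕ → ℂ := fun a b =>
    if h : a < m ∧ b < m then Z ⟨a, h.1⟩ ⟨b, h.2⟩ else 0 with hWdef
  have hWeq : ∀ (a b : Fin m), W a b = Z a b := by
    intro a b
    simp [hWdef, a.isLt, b.isLt]
  have key : ∀ j, ∀ i, ∀ hji : j ≤ i, ∀ hi : i < m,
      Z ⟨j, lt_of_le_of_lt hji hi⟩ ⟨i, hi⟩ = auxC W j * Z ⟨0, hm⟩ ⟨i, hi⟩ := by
    intro j
    induction j using Nat.strong_induction_on with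
    | _ j IH =>
      match j with
      | 0 => intro i hj hi; simp [auxC]
      | (j+1) =>
        intro i hj hi
        have hjm : j + 1 < m := lt_of_le_of_lt hj hi
        have hij : i ≠ j := by omega
        -- entry (i,j) of Zᴴ*Z is 0
        have horth : ∑ k : Fin m,
            star (Z k ⟨i, hi⟩) * Z k ⟨j, by omega⟩ = 0 := by
          have h1 := congrFun (congrFun hZZ ⟨i, hi⟩) ⟨j, by omega⟩
          rw [Matrix.mul_apply, Matrix.one_apply] at h1
          simp only [Matrix.conjTranspose_apply] at h1
          rw [if_neg (by simp [Fin.ext_iff]; omega)] at h1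
          exact h1
        -- convert to a range sum
        have hsum1 : ∑ k : Fin m, star (Z k ⟨i, hi⟩) * Z k ⟨j, by omega⟩
            = ∑ k ∈ Finset.range m, star (W k i) * W k j := by
          rw [← Fin.sum_univ_eq_sum_range (fun k => star (W k i) * W k j) m]
          refine Finset.sum_congr rfl fun k _ => ?_
          rw [hWeq k ⟨i, hi⟩, hWeq k ⟨j, by omega⟩]
        have hsum2 : ∑ k ∈ Finset.range m, star (W k i) * W k j
            = ∑ k ∈ Finset.range (j+2), star (W k i) * W k j := by
          refine (Finset.sum_subset (Finset.range_subset_range.mpr (by omega)) ?_).symm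
          intro k hk hk2
          simp only [Finset.mem_range] at hk hk2
          have hWk : W k j = Z ⟨k, hk⟩ ⟨j, by omega⟩ := hWeq ⟨k, hk⟩ ⟨j, by omega⟩
          rw [hWk, hHess ⟨k, hk⟩ ⟨j, by omega⟩ (by simpa using by omega : (j:ℕ) + 1 < k)]
          ring
        have hsum3 : ∑ k ∈ Finset.range (j+2), star (W k i) * W k j
            = star (W (j+1) i) * W (j+1) j
              + ∑ k ∈ Finset.range (j+1), star (W k i) * W k j := by
          rw [Finset.sum_range_succ]; ring
        -- rewrite inner sum using IH
        have hinner : ∑ k ∈ Finset.range (j+1), star (W k i) * W k j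
            = star (Z ⟨0, hm⟩ ⟨i, hi⟩)
              * ∑ k ∈ Finset.range (j+1), star (auxC W k) * W k j := by
          rw [Finset.mul_sum]
          refine Finset.sum_congr rfl fun k hk => ?_
          have hk' : k < j + 1 := Finset.mem_range.mp hk
          have hkm : k < m := by omega
          have : W k i = Z ⟨k, hkm⟩ ⟨i, hi⟩ := hWeq ⟨k, hkm⟩ ⟨i, hi⟩
          rw [this, IH k hk' i (by omega) hi]
          simp [mul_comm, mul_assoc, mul_left_comm]
        set S : ℂ := ∑ k ∈ Finset.range (j+1), star (auxC W k) * W k j with hS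
        have heq : star (W (j+1) i) * W (j+1) j
            = - (star (Z ⟨0, hm⟩ ⟨i, hi⟩) * S) := by
          have := horth
          rw [hsum1, hsum2, hsum3, hinner] at this
          linear_combination this
        have hnz : W (j+1) j ≠ 0 := by
          have : W (j+1) j = Z ⟨j+1, hjm⟩ ⟨j, by omega⟩ := hWeq ⟨j+1, hjm⟩ ⟨j, by omega⟩
          rw [this]
          exact hproper ⟨j+1, hjm⟩ ⟨j, by omega⟩ (by simp)
        have heq2 : W (j+1) i * star (W (j+1) j)
            = - (Z ⟨0, hm⟩ ⟨i, hi⟩ * star S) := by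
          have := congrArg star heq
          simpa [mul_comm] using this
        have hauxval : auxC W (j+1) = - star S / star (W (j+1) j) := by
          rw [auxC]
          congr 1
          rw [hS]
          rw [Finset.sum_attach (Finset.range (j+1)) (fun k => auxC W k * star (W k j))]
          rw [star_sum]
          simp
        have hgoal : W (j+1) i = auxC W (j+1) * Z ⟨0, hm⟩ ⟨i, hi⟩ := by
          rw [hauxval]
          have hnz' : star (W (j+1) j) ≠ 0 := star_ne_zero.mpr hnz
          rw [div_mul_eq_mul_div, eq_div_iff hnz']
          linear_combination heq2
        have : W (j+1) i = Z ⟨j+1, hjm⟩ ⟨i, hi⟩ := hWeq ⟨j+1, hjm⟩ ⟨i, hi⟩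
        rw [← this]
        exact hgoal
  refine ⟨fun i => auxC W i, fun j => Z ⟨0, hm⟩ j, fun i j hij => ?_⟩
  have := key i j (by omega) j.isLt
  simpa using this
end

section
/- Rational Arnoldi recurrence in matrix form: suppose vectors v₁, …, v_{n+1} ∈ ℂ^m and scalars h_{ik} (1 ≤ i ≤ k+1 ≤ n+1), μ_k, ν_k, ρ_k, η_k satisfy, for each k ≤ n, the Gram–Schmidt relation (ν_k A − μ_k I) h_{k+1,k} v_{k+1} = (ρ_k A − η_k I) v_k − (ν_k A − μ_k I) Σ_{i=1}^{k} h_{ik} v_i, with ν_k A − μ_k I invertible. Let V_{n+1} = [v₁ ⋯ v_{n+1}] ∈ ℂ^{m×(n+1)}. Then there exist (n+1)×n upper-Hessenberg matrices H̲_n and K̲_n with A V_{n+1} K̲_n = V_{n+1} H̲_n and with subdiagonal entries (K̲_n)_{k+1,k} = ν_k h_{k+1,k} and (H̲_n)_{k+1,k} = μ_k h_{k+1,k}; in particular if ν_k h_{k+1,k} ≠ 0 then (H̲_n)_{k+1,k} / (K̲_n)_{k+1,k} = μ_k / ν_k. -/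
open Matrix

theorem rational_arnoldi_matrix_form {m n : ℕ}
    (A : Matrix (Fin m) (Fin m) ℂ)
    (v : Fin (n + 1) → Fin m → ℂ)
    (h : Fin (n + 1) → Fin n → ℂ)
    (μ ν ρ η : Fin n → ℂ)
    (hinv : ∀ k : Fin n, IsUnit (ν k • A - μ k • (1 : Matrix (Fin m) (Fin m) ℂ)))
    (hGS : ∀ k : Fin n,
      (ν k • A - μ k • (1 : Matrix (Fin m) (Fin m) ℂ)).mulVec (h k.succ k • v k.succ) =
        (ρ k • A - η k • (1 : Matrix (Fin m) (Fin m) ℂ)).mulVec (v k.castSucc) -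
          (ν k • A - μ k • (1 : Matrix (Fin m) (Fin m) ℂ)).mulVec
            (∑ i : Fin (n + 1), if (i : ℕ) ≤ (k : ℕ) then h i k • v i else 0)) :
    ∃ Hn Kn : Matrix (Fin (n + 1)) (Fin n) ℂ,
      (∀ (i : Fin (n + 1)) (j : Fin n), (j : ℕ) + 1 < (i : ℕ) → Hn i j = 0) ∧
      (∀ (i : Fin (n + 1)) (j : Fin n), (j : ℕ) + 1 < (i : ℕ) → Kn i j = 0) ∧
      A * (Matrix.of fun (r : Fin m) (c : Fin (n + 1)) => v c r) * Kn =
        (Matrix.of fun (r : Fin m) (c : Fin (n + 1)) => v c r) * Hn ∧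
      (∀ k : Fin n, Kn k.succ k = ν k * h k.succ k ∧ Hn k.succ k = μ k * h k.succ k) ∧
      (∀ k : Fin n, ν k * h k.succ k ≠ 0 →
        Hn k.succ k / Kn k.succ k = μ k / ν k) := by
  classical
  set g : Fin (n+1) → Fin n → ℂ := fun i j => if (i:ℕ) ≤ (j:ℕ) + 1 then h i j else 0 with hg
  set Hn : Matrix (Fin (n+1)) (Fin n) ℂ :=
    Matrix.of (fun i j => μ j * g i j - (if (i:ℕ) = (j:ℕ) then η j else 0)) with hH
  set Kn : Matrix (Fin (n+1)) (Fin n) ℂ :=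
    Matrix.of (fun i j => ν j * g i j - (if (i:ℕ) = (j:ℕ) then ρ j else 0)) with hK
  set V : Matrix (Fin m) (Fin (n+1)) ℂ := Matrix.of (fun r c => v c r) with hV
  -- the key column identity
  have key : ∀ k : Fin n,
      A.mulVec (fun r => ∑ i, Kn i k * v i r) = fun r => ∑ i, Hn i k * v i r := by
    intro k
    set w : Fin m → ℂ := fun r => ∑ i, g i k * v i r with hw
    have hcond : ∀ i : Fin (n+1), ((i:ℕ) = (k:ℕ)) ↔ (i = k.castSucc) := by
      intro i; simp [Fin.ext_iff]
    have hsplit : (h k.succ k • v k.succ) +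
        (∑ i : Fin (n + 1), if (i : ℕ) ≤ (k : ℕ) then h i k • v i else 0) = w := by
      funext r
      have e1 : (∑ i : Fin (n+1), g i k * v i r)
          = ∑ i : Fin (n+1), ((if (i:ℕ) ≤ (k:ℕ) then h i k * v i r else 0)
            + (if i = k.succ then h i k * v i r else 0)) := by
        apply Finset.sum_congr rfl
        intro i _
        by_cases h1 : (i:ℕ) ≤ (k:ℕ)
        · have h2 : i ≠ k.succ := by
            intro e
            have := congrArg Fin.val e
            simp [Fin.val_succ] at this
            omega
          simp [hg, h1, h2, Nat.le_succ_of_le h1]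
        · by_cases h2 : i = k.succ
          · subst h2; simp [hg, h1, Fin.val_succ]
          · have h3 : (i:ℕ) ≠ (k:ℕ)+1 := by
              intro e; exact h2 (Fin.ext (by simp [Fin.val_succ, e]))
            have h4 : ¬ (i:ℕ) ≤ (k:ℕ)+1 := by omega
            simp [hg, h1, h2, h4]
      have e2 : (∑ i : Fin (n+1), if i = k.succ then h i k * v i r else 0)
          = h k.succ k * v k.succ r := by
        simp [Finset.sum_ite_eq']
      have e3 : ((h k.succ k • v k.succ) +
          (∑ i : Fin (n + 1), if (i:ℕ) ≤ (k:ℕ) then h i k • v i else 0)) r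
          = h k.succ k * v k.succ r
            + ∑ i : Fin (n+1), (if (i:ℕ) ≤ (k:ℕ) then h i k * v i r else 0) := by
        simp [Finset.sum_apply, apply_ite (fun f : Fin m → ℂ => f r)]
      rw [e3, hw]
      simp only [e1, Finset.sum_add_distrib, e2]
      ring
    have hM : (ν k • A - μ k • (1 : Matrix (Fin m) (Fin m) ℂ)).mulVec w
        = (ρ k • A - η k • (1 : Matrix (Fin m) (Fin m) ℂ)).mulVec (v k.castSucc) := by
      rw [← hsplit, Matrix.mulVec_add, hGS k]
      abel
    have hlin : ν k • A.mulVec w - μ k • w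
        = ρ k • A.mulVec (v k.castSucc) - η k • v k.castSucc := by
      have := hM
      simpa [Matrix.sub_mulVec, Matrix.smul_mulVec, Matrix.one_mulVec] using this
    have hKcol : (fun r => ∑ i, Kn i k * v i r)
        = ν k • w - ρ k • v k.castSucc := by
      funext r
      have : (∑ i, Kn i k * v i r)
          = ∑ i, (ν k * (g i k * v i r) - (if i = k.castSucc then ρ k * v i r else 0)) := by
        apply Finset.sum_congr rfl
        intro i _
        by_cases h1 : (i:ℕ) = (k:ℕ)
        · simp [hK, (hcond i).mp h1, h1, mul_comm, mul_assoc, sub_mul]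
          ring
        · have h2 : i ≠ k.castSucc := fun e => h1 ((hcond i).mpr e)
          simp [hK, h1, h2, sub_mul]
          ring
      rw [this, Finset.sum_sub_distrib, ← Finset.mul_sum, Finset.sum_ite_eq']
      simp [hw]
    have hHcol : (fun r => ∑ i, Hn i k * v i r)
        = μ k • w - η k • v k.castSucc := by
      funext r
      have : (∑ i, Hn i k * v i r)
          = ∑ i, (μ k * (g i k * v i r) - (if i = k.castSucc then η k * v i r else 0)) := by
        apply Finset.sum_congr rfl
        intro i _
        by_cases h1 : (i:ℕ) = (k:ℕ)
        · simp [hH, (hcond i).mp h1, h1, mul_comm, mul_assoc, sub_mul]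
          ring
        · have h2 : i ≠ k.castSucc := fun e => h1 ((hcond i).mpr e)
          simp [hH, h1, h2, sub_mul]
          ring
      rw [this, Finset.sum_sub_distrib, ← Finset.mul_sum, Finset.sum_ite_eq']
      simp [hw]
    rw [hKcol, hHcol]
    funext r
    have hr := congrFun hlin r
    simp only [Pi.sub_apply, Pi.smul_apply, smul_eq_mul] at hr ⊢
    have hA1 : A.mulVec (ν k • w - ρ k • v k.castSucc) r
        = ν k * A.mulVec w r - ρ k * A.mulVec (v k.castSucc) r := by
      simp [Matrix.mulVec_sub, Matrix.mulVec_smul]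
    rw [hA1]
    linear_combination hr
  refine ⟨Hn, Kn, ?_, ?_, ?_, ?_, ?_⟩
  · intro i j hij
    have h1 : ¬ (i:ℕ) ≤ (j:ℕ)+1 := by omega
    have h2 : (i:ℕ) ≠ (j:ℕ) := by omega
    simp [hH, hg, h1, h2]
  · intro i j hij
    have h1 : ¬ (i:ℕ) ≤ (j:ℕ)+1 := by omega
    have h2 : (i:ℕ) ≠ (j:ℕ) := by omega
    simp [hK, hg, h1, h2]
  · show A * V * Kn = V * Hn
    ext r j
    rw [Matrix.mul_assoc]
    have hVK : (fun s => (V * Kn) s j) = (fun s => ∑ i, Kn i j * v i s) := by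
      funext s; simp [Matrix.mul_apply, hV, mul_comm]
    have lhs : (A * (V * Kn)) r j = A.mulVec (fun s => (V * Kn) s j) r := by
      simp [Matrix.mul_apply, Matrix.mulVec, dotProduct]
    rw [lhs, hVK, key j]
    simp [Matrix.mul_apply, hV, mul_comm]
  · intro k
    have h1 : ((k.succ : Fin (n+1)) : ℕ) ≤ (k:ℕ) + 1 := by simp [Fin.val_succ]
    have h2 : ((k.succ : Fin (n+1)) : ℕ) ≠ (k:ℕ) := by simp [Fin.val_succ]
    constructor <;> simp [hK, hH, hg, h1, h2]
  · intro k hk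
    have h1 : ((k.succ : Fin (n+1)) : ℕ) ≤ (k:ℕ) + 1 := by simp [Fin.val_succ]
    have h2 : ((k.succ : Fin (n+1)) : ℕ) ≠ (k:ℕ) := by simp [Fin.val_succ]
    have hKv : Kn k.succ k = ν k * h k.succ k := by simp [hK, hg, h1, h2]
    have hHv : Hn k.succ k = μ k * h k.succ k := by simp [hH, hg, h1, h2]
    rw [hKv, hHv]
    have hh : h k.succ k ≠ 0 := fun e => hk (by rw [e, mul_zero])
    rw [mul_comm (μ k), mul_comm (ν k), mul_div_mul_left _ _ hh]
end

section
/- Turnover of core transformations: given real Givens rotations G_{i-1}, G_i, Ĝ_{i-1} ∈ ℝ^{3×3} (G_{i-1}, Ĝ_{i-1} rotations in the (1,2)-plane and G_i a rotation in the (2,3)-plane, each of the form [[c, s],[−s, c]] embedded appropriately with c² + s² = 1), there exist rotations Γ_i, Γ̂_i in the (2,3)-plane and Γ_{i-1} in the (1,2)-plane such that G_{i-1} G_i Ĝ_{i-1} = Γ_i Γ_{i-1} Γ̂_i. -/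
open Matrix

/-- Rotation in the (1,2)-plane of ℝ³. -/
def rot12 (c s : ℝ) : Matrix (Fin 3) (Fin 3) ℝ :=
  !![c, s, 0; -s, c, 0; 0, 0, 1]

/-- Rotation in the (2,3)-plane of ℝ³. -/
def rot23 (c s : ℝ) : Matrix (Fin 3) (Fin 3) ℝ :=
  !![1, 0, 0; 0, c, s; 0, -s, c]

set_option maxHeartbeats 4000000 in
theorem turnover_of_core_transformations
    (c₁ s₁ c₂ s₂ c₃ s₃ : ℝ)
    (h₁ : c₁ ^ 2 + s₁ ^ 2 = 1) (h₂ : c₂ ^ 2 + s₂ ^ 2 = 1) (h₃ : c₃ ^ 2 + s₃ ^ 2 = 1) :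
    ∃ γ₂ σ₂ γ₁ σ₁ γ₃ σ₃ : ℝ,
      γ₂ ^ 2 + σ₂ ^ 2 = 1 ∧ γ₁ ^ 2 + σ₁ ^ 2 = 1 ∧ γ₃ ^ 2 + σ₃ ^ 2 = 1 ∧
      rot12 c₁ s₁ * rot23 c₂ s₂ * rot12 c₃ s₃ =
        rot23 γ₂ σ₂ * rot12 γ₁ σ₁ * rot23 γ₃ σ₃ := by
  by_cases hdeg : (c₁*s₃ + s₁*c₂*c₃)^2 + (s₁*s₂)^2 = 0
  · -- degenerate case
    have hB : c₁*s₃ + s₁*c₂*c₃ = 0 := by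
      nlinarith [sq_nonneg (c₁*s₃ + s₁*c₂*c₃), sq_nonneg (s₁*s₂)]
    have hC : s₁*s₂ = 0 := by
      nlinarith [sq_nonneg (c₁*s₃ + s₁*c₂*c₃), sq_nonneg (s₁*s₂)]
    rcases mul_eq_zero.mp hC with hs1 | hs2
    · -- s₁ = 0
      have hc1 : c₁ = 1 ∨ c₁ = -1 := mul_self_eq_one_iff.mp (by nlinarith)
      have hs3 : s₃ = 0 := by
        rcases hc1 with h | h <;> rw [hs1, h] at hB <;> linarith
      have hc3 : c₃ = 1 ∨ c₃ = -1 := mul_self_eq_one_iff.mp (by nlinarith)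
      subst hs1; subst hs3
      rcases hc1 with hc1 | hc1 <;> rcases hc3 with hc3 | hc3 <;> subst hc1 <;> subst hc3
      · exact ⟨c₂, s₂, 1, 0, 1, 0, by linarith, by norm_num, by norm_num, by
          ext x y
          fin_cases x <;> fin_cases y <;>
            simp [rot12, rot23, Matrix.mul_fin_three]⟩
      · exact ⟨c₂, s₂, -1, 0, 1, 0, by linarith, by norm_num, by norm_num, by
          ext x y
          fin_cases x <;> fin_cases y <;>
            simp [rot12, rot23, Matrix.mul_fin_three]⟩
      · exact ⟨c₂, -s₂, -1, 0, 1, 0, by linarith, by norm_num, by norm_num, by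
          ext x y
          fin_cases x <;> fin_cases y <;>
            simp [rot12, rot23, Matrix.mul_fin_three]⟩
      · exact ⟨c₂, -s₂, 1, 0, 1, 0, by linarith, by norm_num, by norm_num, by
          ext x y
          fin_cases x <;> fin_cases y <;>
            simp [rot12, rot23, Matrix.mul_fin_three]⟩
    · -- s₂ = 0
      have hc2 : c₂ = 1 ∨ c₂ = -1 := mul_self_eq_one_iff.mp (by nlinarith)
      subst hs2
      rcases hc2 with hc2 | hc2 <;> subst hc2
      · refine ⟨1, 0, c₁*c₃ - s₁*s₃, c₁*s₃ + s₁*c₃, 1, 0, by norm_num, ?_, by norm_num, ?_⟩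
        · linear_combination (c₃^2+s₃^2)*h₁ + h₃
        · ext x y
          fin_cases x <;> fin_cases y <;>
            simp [rot12, rot23, Matrix.mul_fin_three] <;> ring
      · refine ⟨1, 0, c₁*c₃ + s₁*s₃, s₁*c₃ - c₁*s₃, -1, 0, by norm_num, ?_, by norm_num, ?_⟩
        · linear_combination (c₃^2+s₃^2)*h₁ + h₃
        · ext x y
          fin_cases x <;> fin_cases y <;>
            simp [rot12, rot23, Matrix.mul_fin_three] <;> ring
  · -- main case
    have hnn : (0:ℝ) ≤ (c₁*s₃ + s₁*c₂*c₃)^2 + (s₁*s₂)^2 := by positivity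
    set r := Real.sqrt ((c₁*s₃ + s₁*c₂*c₃)^2 + (s₁*s₂)^2) with hrdef
    have hr : r^2 = (c₁*s₃ + s₁*c₂*c₃)^2 + (s₁*s₂)^2 := Real.sq_sqrt hnn
    have hr0 : r ≠ 0 := by
      intro h0
      apply hdeg
      rw [← hr, h0]; ring
    have hrr : r * r = (c₁*s₃ + s₁*c₂*c₃)^2 + (s₁*s₂)^2 := by
      rw [← hr]; ring
    refine ⟨(s₁*c₃ + c₁*c₂*s₃)/r, (s₂*s₃)/r, c₁*c₃ - s₁*c₂*s₃, r,
        (c₁*s₃ + s₁*c₂*c₃)/r, (s₁*s₂)/r, ?_, ?_, ?_, ?_⟩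
    · field_simp
      rw [hr]
      linear_combination ((-1)*s₃^2 + (1)*c₂^2*s₃^2) * h₁ + ((1)*s₃^2 + (-1)*s₁^2*s₃^2 + (-1)*s₁^2*c₃^2) * h₂ + ((1)*s₁^2*s₂^2) * h₃
    · rw [hr]
      linear_combination ((1)*s₃^2 + (1)*c₃^2) * h₁ + ((1)*s₁^2*s₃^2 + (1)*s₁^2*c₃^2) * h₂ + ((1) + (-1)*s₁^2*s₂^2) * h₃
    · field_simp
      rw [hr]
      ring
    · simp only [rot12, rot23, Matrix.mul_fin_three]
      ext x y
      fin_cases x <;> fin_cases y <;>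
        simp only [Matrix.cons_val', Matrix.cons_val_zero, Matrix.cons_val_one, Matrix.head_cons,
          Matrix.empty_val', Matrix.cons_val_fin_one, Matrix.head_fin_const, Matrix.cons_val_two,
          Matrix.tail_cons, Matrix.of_apply, Fin.zero_eta, Fin.mk_one, Fin.reduceFinMk, mul_zero, zero_mul, add_zero, zero_add, neg_zero, sub_zero, zero_sub, mul_one, one_mul, ne_eq, OfNat.ofNat_ne_zero, not_false_eq_true, zero_pow] <;> field_simp <;> try rw [hr]
      · ring
      · ring
      · linear_combination ((-1)*s₁*s₃^3 + (-1)*s₁*c₃^2*s₃ + (1)*s₁*c₂^2*s₃^3 + (1)*s₁*c₂^2*c₃^2*s₃) * h₁ + ((1)*s₁*s₃^3 + (1)*s₁*c₃^2*s₃ + (-1)*s₁^3*s₃^3 + (-1)*s₁^3*c₃^2*s₃ + (1)*c₁*s₁^2*c₂*c₃*s₃^2 + (1)*c₁*s₁^2*c₂*c₃^3) * h₂ + ((-1)*s₁*s₂^2*s₃ + (1)*s₁^3*s₂^2*s₃ + (-1)*c₁*s₁^2*c₂*s₂^2*c₃) * h₃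
      · linear_combination ((1)*s₁*c₂*s₂*c₃*s₃ + (1)*c₁*s₂*s₃^2) * h₁ + ((1)*c₁*s₁^2*s₂*s₃^2 + (1)*c₁*s₁^2*s₂*c₃^2) * h₂ + ((-1)*c₁*s₁^2*s₂^3) * h₃
      · linear_combination ((-1)*s₂*s₁^2*c₃) * h₂ + ((-1)*s₂*c₁*s₁*c₂*s₃ + (-1)*s₂*s₁^2*c₃*c₂^2) * h₃
      · linear_combination (c₁*s₁*c₃*s₃ + c₂*s₁^2*c₃^2) * h₂ + ((-1)*c₂*s₁^2*s₂^2) * h₃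
end
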